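/- arXiv:1603.06813 — 2 statements merged into one kernel-verified Lean document; each statement's English description precedes it below -/
import Mathlib

section
/- Let m ≥ 1 be an integer and let 0 ≤ l ≤ 2m. For all a, b, c, d, u, w ∈ ℂ the following identity holds. Write (a + b·t)^{2m−l}·(c + d·t)^{l} = ∑_{j=0}^{2m} c_j·t^j as a polynomial in t. Then ∑_{j=0}^{2m} c_j·C(2m,j)^{−1}·∑_{l₁} C(m,l₁)·C(m,j−l₁)·u^{l₁}·w^{j−l₁} = C(2m,l)^{−1}·∑_{l₁} C(m,l₁)·C(m,l−l₁)·(a + b·u)^{m−l₁}·(c + d·u)^{l₁}·(a + b·w)^{m−l+l₁}·(c + d·w)^{l−l₁}, where both inner sums run over all integers l₁ and C(p,q) denotes the binomial coefficient with the convention C(p,q) = 0 whenever q < 0 or q > p (so that all exponents appearing with nonzero coefficient are nonnegative). -/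
/-! The functional `t ^ j ↦ C(2m, j)⁻¹ K_j`, where `K_j` is the coefficient of `s ^ j` in
`(1 + u s) ^ m (1 + w s) ^ m`, sends `(x + y t) ^ (2m)` to `(x + y u) ^ m (x + y w) ^ m`: the
binomial coefficients cancel and what is left is the homogenized product. Apply it to the expansion
`((a + s c) + (b + s d) t) ^ (2m) = ∑ₗ C(2m, l) s ^ l (a + b t) ^ (2m - l) (c + d t) ^ l` and
compare coefficients of `s ^ l` on both sides, viewed as polynomials in `s`. -/

open Polynomial Finset

section CommSemiring

variable {R : Type*} [CommSemiring R]

theorem coeff_C_add_C_mul_X_pow (x y : R) (n j : ℕ) :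
    ((C x + C y * X) ^ n).coeff j = n.choose j * x ^ (n - j) * y ^ j := by
  have hterm (k : ℕ) : (C y * X) ^ k * C x ^ (n - k) * (n.choose k : R[X]) =
      C (n.choose k * x ^ (n - k) * y ^ k) * X ^ k := by
    simp only [mul_pow, C_mul, C_pow, map_natCast]
    ring
  rw [add_comm, add_pow]
  simp only [hterm, finsetSum_coeff, coeff_C_mul_X_pow, sum_ite_eq, mem_range]
  split_ifs with hj
  · rfl
  · simp [Nat.choose_eq_zero_of_lt (by omega : n < j)]

theorem coeff_C_add_C_mul_X_pow_mul_C_add_C_mul_X_pow (x y x' y' : R) (m n j : ℕ) :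
    ((C x + C y * X) ^ m * (C x' + C y' * X) ^ n).coeff j =
      ∑ p ∈ range (m + 1), if p ≤ j then
        (m.choose p : R) * n.choose (j - p) * x ^ (m - p) * y ^ p * x' ^ (n + p - j) * y' ^ (j - p)
      else 0 := by
  rw [coeff_mul, Nat.sum_antidiagonal_eq_sum_range_succ_mk, ← sum_filter]
  symm
  refine sum_subset_zero_on_sdiff (fun p hp => ?_) (fun p hp => ?_) (fun p hp => ?_)
  · simp only [mem_filter, mem_range] at hp ⊢
    omega
  · simp only [mem_sdiff, mem_range, mem_filter, not_and, not_le] at hp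
    simp [coeff_C_add_C_mul_X_pow, Nat.choose_eq_zero_of_lt (by omega : m < p)]
  · simp only [mem_filter, mem_range] at hp
    simp only [coeff_C_add_C_mul_X_pow, show n - (j - p) = n + p - j by omega]
    ring

noncomputable def splitKernel (m : ℕ) (u w : R) : R[X] := (1 + C u * X) ^ m * (1 + C w * X) ^ m

theorem coeff_splitKernel (m : ℕ) (u w : R) (j : ℕ) :
    (splitKernel m u w).coeff j = ∑ p ∈ range (m + 1),
      if p ≤ j then (m.choose p : R) * m.choose (j - p) * u ^ p * w ^ (j - p) else 0 := by
  rw [splitKernel, ← C_1, coeff_C_add_C_mul_X_pow_mul_C_add_C_mul_X_pow]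
  simp only [one_pow, mul_one]

theorem sum_pow_mul_pow_mul_coeff_splitKernel (m : ℕ) (x y u w : R) :
    ∑ j ∈ range (2 * m + 1), x ^ (2 * m - j) * y ^ j * (splitKernel m u w).coeff j =
      (x + y * u) ^ m * (x + y * w) ^ m := by
  set Q : R[X] := (C x + C (y * u) * X) ^ m * (C x + C (y * w) * X) ^ m
  have hcoeff (j : ℕ) : Q.coeff j = x ^ (2 * m - j) * y ^ j * (splitKernel m u w).coeff j := by
    rw [splitKernel, ← C_1, coeff_mul, coeff_mul, mul_sum]
    refine sum_congr rfl fun ⟨p, q⟩ hpq => ?_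
    rw [HasAntidiagonal.mem_antidiagonal] at hpq
    simp only [coeff_C_add_C_mul_X_pow]
    rcases le_or_gt p m with hp | hp
    · rcases le_or_gt q m with hq | hq
      · rw [show 2 * m - j = (m - p) + (m - q) by omega, ← hpq]
        ring
      · simp [Nat.choose_eq_zero_of_lt hq]
    · simp [Nat.choose_eq_zero_of_lt hp]
  have hdeg : Q.natDegree < 2 * m + 1 := Nat.lt_succ_of_le (by simp only [Q]; compute_degree; omega)
  calc _ = ∑ j ∈ range (2 * m + 1), Q.coeff j * 1 ^ j := by simp [hcoeff]
    _ = Q.eval 1 := (eval_eq_sum_range' hdeg 1).symm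
    _ = _ := by simp [Q]

theorem C_add_C_mul_X_pow_eq_sum (a b c d s : R) (n : ℕ) :
    (C (a + s * c) + C (b + s * d) * X) ^ n =
      ∑ k ∈ range (n + 1),
        (n.choose k * s ^ k) • ((C a + C b * X) ^ (n - k) * (C c + C d * X) ^ k) := by
  have hsplit : C (a + s * c) + C (b + s * d) * X = C s * (C c + C d * X) + (C a + C b * X) := by
    simp only [C_add, C_mul]
    ring
  rw [hsplit, add_pow]
  refine sum_congr rfl fun k _ => ?_
  simp only [smul_eq_C_mul, mul_pow, C_mul, C_pow, map_natCast]
  ring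

end CommSemiring

section Field

variable {K : Type*} [Field K]

-- The splitting map `S^{2m}(V) → S^m(V) ⊗ S^m(V)` followed by evaluation at `(u, w)`,
-- in the affine coordinate `t`.
noncomputable def splitFunctional (m : ℕ) (u w : K) : K[X] →ₗ[K] K :=
  ∑ j ∈ range (2 * m + 1),
    (((2 * m).choose j : K)⁻¹ * (splitKernel m u w).coeff j) • lcoeff K j

theorem splitFunctional_apply (m : ℕ) (u w : K) (p : K[X]) :
    splitFunctional m u w p =
      ∑ j ∈ range (2 * m + 1),
        ((2 * m).choose j : K)⁻¹ * (splitKernel m u w).coeff j * p.coeff j := by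
  simp [splitFunctional]

variable [CharZero K]

theorem splitFunctional_C_add_C_mul_X_pow (m : ℕ) (u w x y : K) :
    splitFunctional m u w ((C x + C y * X) ^ (2 * m)) = (x + y * u) ^ m * (x + y * w) ^ m := by
  rw [splitFunctional_apply, ← sum_pow_mul_pow_mul_coeff_splitKernel]
  refine sum_congr rfl fun j hj => ?_
  have : ((2 * m).choose j : K) ≠ 0 := by
    exact_mod_cast (Nat.choose_pos (Nat.le_of_lt_succ (mem_range.1 hj))).ne'
  rw [coeff_C_add_C_mul_X_pow]
  field_simp

theorem choose_mul_splitFunctional (m : ℕ) (u w a b c d : K) {l : ℕ} (hl : l ≤ 2 * m) :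
    ((2 * m).choose l : K) *
        splitFunctional m u w ((C a + C b * X) ^ (2 * m - l) * (C c + C d * X) ^ l) =
      ((C (a + b * u) + C (c + d * u) * X) ^ m *
        (C (a + b * w) + C (c + d * w) * X) ^ m).coeff l := by
  set G : K[X] := ∑ k ∈ range (2 * m + 1), C ((2 * m).choose k *
    splitFunctional m u w ((C a + C b * X) ^ (2 * m - k) * (C c + C d * X) ^ k)) * X ^ k
  have hG : G =
      (C (a + b * u) + C (c + d * u) * X) ^ m * (C (a + b * w) + C (c + d * w) * X) ^ m := by
    refine Polynomial.funext fun s => ?_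
    have hgen := congrArg (splitFunctional m u w) (C_add_C_mul_X_pow_eq_sum a b c d s (2 * m))
    rw [splitFunctional_C_add_C_mul_X_pow, map_sum] at hgen
    simp only [G, eval_finsetSum, eval_mul, eval_C, eval_pow, eval_add, eval_X]
    rw [show (a + b * u + (c + d * u) * s) ^ m * (a + b * w + (c + d * w) * s) ^ m =
      (a + s * c + (b + s * d) * u) ^ m * (a + s * c + (b + s * d) * w) ^ m by ring, hgen]
    simp only [map_smul, smul_eq_mul]
    exact sum_congr rfl fun k _ => by ring
  rw [← hG, finsetSum_coeff]
  simp only [coeff_C_mul_X_pow, sum_ite_eq, mem_range, Nat.lt_succ_of_le hl, if_true]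

end Field

theorem stmt_4_general (m : ℕ) (l : ℕ) (hl : l ≤ 2 * m) (a b c d u w : ℂ) :
    (∑ j ∈ Finset.range (2 * m + 1),
        ((Polynomial.C a + Polynomial.C b * Polynomial.X) ^ (2 * m - l) *
            (Polynomial.C c + Polynomial.C d * Polynomial.X) ^ l).coeff j *
          (((2 * m).choose j : ℂ))⁻¹ *
          ∑ l₁ ∈ Finset.range (m + 1),
            if l₁ ≤ j then
              (m.choose l₁ : ℂ) * (m.choose (j - l₁) : ℂ) * u ^ l₁ * w ^ (j - l₁)
            else 0) =
      (((2 * m).choose l : ℂ))⁻¹ *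
        ∑ l₁ ∈ Finset.range (m + 1),
          if l₁ ≤ l then
            (m.choose l₁ : ℂ) * (m.choose (l - l₁) : ℂ) *
              (a + b * u) ^ (m - l₁) * (c + d * u) ^ l₁ *
              (a + b * w) ^ (m + l₁ - l) * (c + d * w) ^ (l - l₁)
          else 0 := by
  have hchoose : ((2 * m).choose l : ℂ) ≠ 0 := by exact_mod_cast (Nat.choose_pos hl).ne'
  rw [← coeff_C_add_C_mul_X_pow_mul_C_add_C_mul_X_pow,
    ← choose_mul_splitFunctional m u w a b c d hl, inv_mul_cancel_left₀ hchoose,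
    splitFunctional_apply]
  refine sum_congr rfl fun j _ => ?_
  rw [coeff_splitKernel]
  ring

theorem stmt_4 (m : ℕ) (hm : 1 ≤ m) (l : ℕ) (hl : l ≤ 2 * m) (a b c d u w : ℂ) :
    (∑ j ∈ Finset.range (2 * m + 1),
        ((Polynomial.C a + Polynomial.C b * Polynomial.X) ^ (2 * m - l) *
            (Polynomial.C c + Polynomial.C d * Polynomial.X) ^ l).coeff j *
          (((2 * m).choose j : ℂ))⁻¹ *
          ∑ l₁ ∈ Finset.range (m + 1),
            if l₁ ≤ j then
              (m.choose l₁ : ℂ) * (m.choose (j - l₁) : ℂ) * u ^ l₁ * w ^ (j - l₁)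
            else 0) =
      (((2 * m).choose l : ℂ))⁻¹ *
        ∑ l₁ ∈ Finset.range (m + 1),
          if l₁ ≤ l then
            (m.choose l₁ : ℂ) * (m.choose (l - l₁) : ℂ) *
              (a + b * u) ^ (m - l₁) * (c + d * u) ^ l₁ *
              (a + b * w) ^ (m + l₁ - l) * (c + d * w) ^ (l - l₁)
          else 0 :=
  stmt_4_general m l hl a b c d u w
end

section
/- For every integer n ≥ 2 there exist real numbers r₁, ρ₆ ∈ (0,1) such that for every integer m ≥ 1, every pair of distinct n-th roots of unity ζ ≠ ζ′, and all u, t ∈ ℂ with |u − ζ| < r₁, |t − ζ′| < r₁ and |t − u| ≤ 2·|1 + conj(u)·t|, one has |∑_{l=0}^{m} b_{m,l} u^{−l} t^{l}| < ρ₆^m. -/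
/-- `b_{m,l} = C(m,l)^2 / C(2m,m)` as a complex number. -/
noncomputable def bml (m l : ℕ) : ℂ :=
  ((m.choose l : ℂ)) ^ 2 / ((2 * m).choose m : ℂ)

/-!
With `x = t / u` the sum is `S_m(x) / C(2m,m)`, where
`S_m(x) = ∑ C(m,l)² xˡ = (1-x)ᵐ P_m((1+x)/(1-x))` for the Legendre polynomial `P_m`.
Hence `S_m` satisfies Legendre's three-term recurrence, and since
`(m+1) C(2m+2,m+1) = 2(2m+1) C(2m,m)` and `3(m+1)² ≤ (2m+1)(2m+3)`, the recurrence propagates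
`|S_m(x)| ≤ ρᵐ C(2m,m)` whenever `ρ|1+x|/2 + |1-x|²/12 ≤ ρ²`. As there are finitely many pairs
of distinct `n`-th roots of unity, `|ζ + ζ'| ≤ 2 - η` for a uniform `η > 0`; for `u, t` close
to `ζ, ζ'` the ratio `x` then has `|x|` close to `1` and `|1+x|` bounded away from `2`, and by
the parallelogram law `|1-x|² = 2 + 2|x|² - |1+x|²` this gives the condition with
`ρ = 1 - η/48 < 1`.
-/

open Polynomial Finset Filter Topology

theorem Nat.mul_choose_succ_sq (k j : ℕ) :
    (k * k.choose (j + 1) ^ 2 : ℤ) = k.choose j * k.choose (j + 1)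
      + k.choose (j + 1) * k.choose (j + 2) + (k + 2) * k.choose j * k.choose (j + 2) := by
  rcases le_or_gt k j with hkj | hjk
  · simp [Nat.choose_eq_zero_of_lt (by omega : k < j + 1),
      Nat.choose_eq_zero_of_lt (by omega : k < j + 2)]
  · have hb := Nat.choose_succ_right_eq k j
    have hc := Nat.choose_succ_right_eq k (j + 1)
    qify [hjk.le, Nat.succ_le_of_lt hjk] at hb hc ⊢
    rw [← eq_div_iff (by positivity)] at hb hc
    rw [hc, hb]
    field_simp
    ring

noncomputable def chooseSqPoly (m : ℕ) : ℤ[X] :=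
  ∑ l ∈ range (m + 1), C ((m.choose l : ℤ) ^ 2) * X ^ l

theorem coeff_chooseSqPoly (m l : ℕ) : (chooseSqPoly m).coeff l = (m.choose l : ℤ) ^ 2 := by
  simp only [chooseSqPoly, finsetSum_coeff, coeff_C_mul_X_pow]
  rw [sum_ite_eq]
  split_ifs with h
  · rfl
  · simp [Nat.choose_eq_zero_of_lt (by simpa using h : m < l)]

theorem chooseSqPoly_add_two (k : ℕ) :
    C ((k : ℤ) + 2) * chooseSqPoly (k + 2) = C (2 * (k : ℤ) + 3) * ((1 + X) * chooseSqPoly (k + 1))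
      - C ((k : ℤ) + 1) * ((1 - X) ^ 2 * chooseSqPoly k) := by
  have hadd (p : ℤ[X]) : (1 + X) * p = p + X * p := by ring
  have hsub (p : ℤ[X]) : (1 - X) ^ 2 * p = p - C 2 * (X * p) + X * (X * p) := by
    rw [C_ofNat]; ring
  ext (_ | _ | j) <;>
    simp only [hadd, hsub, coeff_sub, coeff_add, coeff_C_mul, coeff_X_mul, coeff_X_mul_zero,
      coeff_chooseSqPoly]
  · simp; ring
  · simp; ring
  · simp only [Nat.choose_succ_succ']
    push_cast
    linear_combination (-2) * Nat.mul_choose_succ_sq k j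

theorem le_pow_mul_centralBinom_of_rec {s : ℕ → ℝ} {A B ρ : ℝ} (hA : 0 ≤ A) (hB : 0 ≤ B)
    (hρ : 0 ≤ ρ) (h₀ : s 0 ≤ 1) (h₁ : s 1 ≤ 2 * ρ)
    (hrec : ∀ k : ℕ, (k + 2) * s (k + 2) ≤ (2 * k + 3) * A * s (k + 1) + (k + 1) * B * s k)
    (hAB : ρ * A / 2 + B / 12 ≤ ρ ^ 2) (m : ℕ) :
    s m ≤ ρ ^ m * m.centralBinom := by
  induction m using Nat.strong_induction_on with
  | _ m ih =>
  match m, ih with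
  | 0, _ => simpa using h₀
  | 1, _ => simpa [mul_comm, Nat.centralBinom] using h₁
  | k + 2, ih =>
    have rel₁ : ((k + 1 : ℕ) : ℝ) * (k + 1).centralBinom = 2 * (2 * k + 1) * k.centralBinom := by
      exact_mod_cast Nat.succ_mul_centralBinom_succ k
    have rel₂ : ((k + 2 : ℕ) : ℝ) * (k + 2).centralBinom
        = 2 * (2 * k + 3) * (k + 1).centralBinom := by
      exact_mod_cast Nat.succ_mul_centralBinom_succ (k + 1)
    push_cast at rel₁ rel₂ ⊢
    have hbracket : 2 * (2 * k + 1) * (2 * k + 3) * A * ρ + (k + 1) ^ 2 * B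
        ≤ 4 * (2 * k + 1) * (2 * k + 3) * ρ ^ 2 := by
      have hq : 3 * ((k : ℝ) + 1) ^ 2 ≤ (2 * k + 1) * (2 * k + 3) := by nlinarith
      have hP : (0 : ℝ) ≤ (2 * k + 1) * (2 * k + 3) := by positivity
      nlinarith [mul_le_mul_of_nonneg_left hAB hP, mul_le_mul_of_nonneg_right hq hB]
    have hc : (0 : ℝ) ≤ ρ ^ k * (k + 1).centralBinom := by positivity
    have hk : (0 : ℝ) < 2 * (2 * k + 1) * (k + 2) := by positivity
    refine le_of_mul_le_mul_left ?_ hk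
    calc 2 * (2 * k + 1) * ((k : ℝ) + 2) * s (k + 2)
        ≤ 2 * (2 * k + 1) * ((2 * k + 3) * A * s (k + 1) + (k + 1) * B * s k) := by
          rw [mul_assoc]; gcongr; exact_mod_cast hrec k
      _ ≤ 2 * (2 * k + 1) * ((2 * k + 3) * A * (ρ ^ (k + 1) * (k + 1).centralBinom)
          + (k + 1) * B * (ρ ^ k * k.centralBinom)) := by
          gcongr
          · exact ih (k + 1) (by omega)
          · exact ih k (by omega)
      _ = ρ ^ k * (k + 1).centralBinom
          * (2 * (2 * k + 1) * (2 * k + 3) * A * ρ + (k + 1) ^ 2 * B) := by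
          linear_combination (-(k + 1) * B * ρ ^ k) * rel₁
      _ ≤ ρ ^ k * (k + 1).centralBinom * (4 * (2 * k + 1) * (2 * k + 3) * ρ ^ 2) := by gcongr
      _ = 2 * (2 * k + 1) * (k + 2) * (ρ ^ (k + 2) * (k + 2).centralBinom) := by
          linear_combination (-2 * (2 * k + 1) * ρ ^ (k + 2)) * rel₂

theorem aeval_chooseSqPoly {A : Type*} [CommRing A] (x : A) (m : ℕ) :
    aeval x (chooseSqPoly m) = ∑ l ∈ range (m + 1), (m.choose l : A) ^ 2 * x ^ l := by
  simp [chooseSqPoly]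

theorem norm_aeval_chooseSqPoly_le {x : ℂ} {ρ : ℝ} (hρ : 0 ≤ ρ) (h₁ : ‖1 + x‖ ≤ 2 * ρ)
    (h : ρ * ‖1 + x‖ / 2 + ‖1 - x‖ ^ 2 / 12 ≤ ρ ^ 2) (m : ℕ) :
    ‖aeval x (chooseSqPoly m)‖ ≤ ρ ^ m * m.centralBinom := by
  refine le_pow_mul_centralBinom_of_rec (s := fun m ↦ ‖aeval x (chooseSqPoly m)‖)
    (norm_nonneg _) (by positivity) hρ ?_ ?_ (fun k ↦ ?_) h m
  · simp [chooseSqPoly]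
  · simpa [chooseSqPoly, sum_range_succ, add_comm] using h₁
  · have hrec := congrArg (aeval x) (chooseSqPoly_add_two k)
    simp only [map_mul, map_sub, map_add, map_one, aeval_X, map_pow, map_natCast,
      map_ofNat] at hrec
    have hnorm (a b : ℕ) : ‖(a * (k : ℂ) + b)‖ = a * k + b := by
      simpa using Complex.norm_natCast (a * k + b)
    have h₁₂ : ‖(k : ℂ) + 2‖ = k + 2 := by simpa using hnorm 1 2
    have h₂₃ : ‖2 * (k : ℂ) + 3‖ = 2 * k + 3 := by simpa using hnorm 2 3
    have h₁₁ : ‖(k : ℂ) + 1‖ = k + 1 := by simpa using hnorm 1 1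
    calc ((k : ℝ) + 2) * ‖aeval x (chooseSqPoly (k + 2))‖
        = ‖((k : ℂ) + 2) * aeval x (chooseSqPoly (k + 2))‖ := by rw [norm_mul, h₁₂]
      _ ≤ ‖(2 * (k : ℂ) + 3) * ((1 + x) * aeval x (chooseSqPoly (k + 1)))‖
          + ‖((k : ℂ) + 1) * ((1 - x) ^ 2 * aeval x (chooseSqPoly k))‖ := by
          rw [hrec]; exact norm_sub_le _ _
      _ = _ := by simp only [norm_mul, norm_pow, h₂₃, h₁₁]; ring

theorem norm_aeval_chooseSqPoly_le_of_norm_one_add_le {x : ℂ} {c : ℝ} (hc₀ : 0 < c)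
    (h₁ : ‖1 + x‖ ≤ 2 - c) (h : ‖x‖ ≤ 1 + c / 8) (m : ℕ) :
    ‖aeval x (chooseSqPoly m)‖ ≤ (1 - c / 24) ^ m * m.centralBinom := by
  have hc₂ : c ≤ 2 := by linarith [norm_nonneg (1 + x)]
  refine norm_aeval_chooseSqPoly_le (by linarith) (by linarith) ?_ m
  have hpar := parallelogram_law_with_norm ℝ (1 : ℂ) x
  rw [norm_one] at hpar
  have hA := norm_nonneg (1 + x)
  -- `ρA/2 - A²/12` is increasing in `A = ‖1 + x‖` on `[0, 2 - c]`.
  have hmono : 0 ≤ (1 - c / 24) / 2 - (2 - c + ‖1 + x‖) / 12 := by linarith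
  nlinarith [mul_nonneg (sub_nonneg.2 h₁) hmono, mul_le_mul h h (norm_nonneg x) (by linarith)]

theorem exists_norm_add_le_two_sub {n : ℕ} (hn : n ≠ 0) :
    ∃ η : ℝ, 0 < η ∧ η ≤ 2 ∧ ∀ ζ ζ' : ℂ, ζ ^ n = 1 → ζ' ^ n = 1 → ζ ≠ ζ' → ‖ζ + ζ'‖ ≤ 2 - η := by
  set T : Set (ℂ × ℂ) := {p | p.1 ^ n = 1 ∧ p.2 ^ n = 1 ∧ p.1 ≠ p.2}
  have hT : T.Finite := by
    have hR : {z : ℂ | z ^ n = 1}.Finite := by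
      convert (nthRoots n (1 : ℂ)).toFinset.finite_toSet using 1
      ext z; simp [mem_nthRoots (Nat.pos_of_ne_zero hn)]
    exact (hR.prod hR).subset fun p hp ↦ ⟨hp.1, hp.2.1⟩
  have hlt : ∀ p ∈ T, ‖p.1 + p.2‖ < 2 := by
    rintro ⟨ζ, ζ'⟩ ⟨hζ, hζ', hne⟩
    have hpar := parallelogram_law_with_norm ℝ ζ ζ'
    rw [Complex.norm_eq_one_of_pow_eq_one hζ hn, Complex.norm_eq_one_of_pow_eq_one hζ' hn] at hpar
    have : 0 < ‖ζ - ζ'‖ := norm_pos_iff.2 (sub_ne_zero.2 hne)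
    nlinarith [norm_nonneg (ζ + ζ')]
  have hev : ∀ᶠ η in 𝓝[>] (0 : ℝ), ∀ p ∈ T, η ≤ 2 - ‖p.1 + p.2‖ :=
    hT.eventually_all.2 fun p hp ↦
      nhdsWithin_le_nhds (eventually_le_nhds (sub_pos.2 (hlt p hp)))
  have hle : ∀ᶠ η in 𝓝[>] (0 : ℝ), η ≤ 2 := nhdsWithin_le_nhds (eventually_le_nhds two_pos)
  obtain ⟨η, hη, hη₂, hη₀⟩ := (hev.and (hle.and self_mem_nhdsWithin)).exists
  exact ⟨η, hη₀, hη₂, fun ζ ζ' hζ hζ' hne ↦ by linarith [hη (ζ, ζ') ⟨hζ, hζ', hne⟩]⟩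

theorem norm_one_add_div_le_of_near {ζ ζ' u t : ℂ} {η : ℝ} (hζ : ‖ζ‖ = 1) (hζ' : ‖ζ'‖ = 1)
    (hgap : ‖ζ + ζ'‖ ≤ 2 - η) (hu : ‖u - ζ‖ < η / 48) (ht : ‖t - ζ'‖ < η / 48) :
    ‖1 + t / u‖ ≤ 2 - η / 2 ∧ ‖t / u‖ ≤ 1 + η / 16 := by
  have hη₀ : 0 < η := by linarith [norm_nonneg (u - ζ)]
  have hη₂ : η ≤ 2 := by linarith [norm_nonneg (ζ + ζ')]
  have hu' : 1 - η / 48 < ‖u‖ := by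
    linarith [norm_sub_norm_le ζ u, norm_sub_rev u ζ]
  have ht' : ‖t‖ < 1 + η / 48 := by linarith [norm_le_norm_add_norm_sub' t ζ']
  have hut : ‖u + t‖ < 2 - η + η / 24 := by
    have := norm_add₃_le (a := ζ + ζ') (b := u - ζ) (c := t - ζ')
    rw [show ζ + ζ' + (u - ζ) + (t - ζ') = u + t by ring] at this
    linarith
  have hu₀ : 0 < ‖u‖ := by linarith
  have hu0 : u ≠ 0 := norm_pos_iff.1 hu₀
  rw [one_add_div hu0, norm_div, norm_div, div_le_iff₀ hu₀, div_le_iff₀ hu₀]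
  constructor <;> nlinarith

theorem sum_bml_mul_pow (m : ℕ) (y : ℂ) :
    ∑ l ∈ range (m + 1), bml m l * y ^ l = aeval y (chooseSqPoly m) / m.centralBinom := by
  rw [aeval_chooseSqPoly, sum_div, Nat.centralBinom_eq_two_mul_choose]
  refine sum_congr rfl fun l _ ↦ ?_
  rw [bml]
  ring

theorem stmt_9 (n : ℕ) (hn : 2 ≤ n) :
    ∃ r₁ ρ₆ : ℝ, 0 < r₁ ∧ r₁ < 1 ∧ 0 < ρ₆ ∧ ρ₆ < 1 ∧
      ∀ m : ℕ, 1 ≤ m → ∀ ζ ζ' : ℂ, ζ ^ n = 1 → ζ' ^ n = 1 → ζ ≠ ζ' →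
        ∀ u t : ℂ, ‖u - ζ‖ < r₁ → ‖t - ζ'‖ < r₁ →
          ‖t - u‖ ≤ 2 * ‖1 + (starRingEnd ℂ) u * t‖ →
          ‖∑ l ∈ Finset.range (m + 1), bml m l * u⁻¹ ^ l * t ^ l‖ < ρ₆ ^ m := by
  have hn₀ : n ≠ 0 := by omega
  obtain ⟨η, hη₀, hη₂, hgap⟩ := exists_norm_add_le_two_sub hn₀
  refine ⟨η / 48, 1 - η / 96, by positivity, by linarith, by linarith, by linarith, ?_⟩
  intro m hm ζ ζ' hζ hζ' hne u t hu ht _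
  obtain ⟨h₁, h₂⟩ := norm_one_add_div_le_of_near (Complex.norm_eq_one_of_pow_eq_one hζ hn₀)
    (Complex.norm_eq_one_of_pow_eq_one hζ' hn₀) (hgap ζ ζ' hζ hζ' hne) hu ht
  have hbound := norm_aeval_chooseSqPoly_le_of_norm_one_add_le (c := η / 2) (by positivity)
    h₁ (by linarith) m
  simp_rw [mul_assoc, ← mul_pow, inv_mul_eq_div, sum_bml_mul_pow, norm_div, Complex.norm_natCast]
  calc ‖aeval (t / u) (chooseSqPoly m)‖ / m.centralBinom ≤ (1 - η / 2 / 24) ^ m := by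
        rw [div_le_iff₀ (by exact_mod_cast m.centralBinom_pos)]
        exact hbound
    _ < (1 - η / 96) ^ m := pow_lt_pow_left₀ (by linarith) (by linarith) (by omega)
end
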